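/- Let (P, C, ψ, e, ψ^C) be entwining data, M = P^{coC}_e, and (ρ, σ) crossed product data satisfying conditions (i)–(iv) and the cocycle and twisted module conditions, so that M ×_{ρ,σ} C is the crossed product algebra with product (x ⊗ b)(y ⊗ c) = x ρ(b₍₁₎ ⊗ y_α) σ(b₍₂₎^α₍₁₎ ⊗ c_A) ⊗ b₍₂₎^α₍₂₎^A. Then 1 ⊗ e is a two-sided unit: (1 ⊗ e)(x ⊗ c) = (x ⊗ c)(1 ⊗ e) = x ⊗ c for all x ∈ M, c ∈ C. -/
import Mathlib


open TensorProduct LinearMap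

noncomputable section

namespace Entwine

variable (k : Type) [Field k] (P : Type) [Ring P] [Algebra k P]
  (C : Type) [AddCommGroup C] [Module k C] [Coalgebra k C]

/-- coproduct of `C` -/
abbrev Δ : C →ₗ[k] C ⊗[k] C := Coalgebra.comul
/-- counit of `C` -/
abbrev ε : C →ₗ[k] k := Coalgebra.counit
/-- multiplication of `P` -/
abbrev μ : P ⊗[k] P →ₗ[k] P := LinearMap.mul' k P

variable (ψ : C ⊗[k] P →ₗ[k] P ⊗[k] C)

/-- entwining axiom `ψ∘(id⊗μ) = (μ⊗id)∘ψ₂₃∘ψ₁₂` -/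
def AxMul : Prop :=
  ψ ∘ₗ map LinearMap.id (μ k P) =
    map (μ k P) LinearMap.id
      ∘ₗ (TensorProduct.assoc k P P C).symm.toLinearMap
      ∘ₗ map LinearMap.id ψ
      ∘ₗ (TensorProduct.assoc k P C P).toLinearMap
      ∘ₗ map ψ LinearMap.id
      ∘ₗ (TensorProduct.assoc k C P P).symm.toLinearMap

/-- entwining axiom `ψ(c ⊗ 1) = 1 ⊗ c` -/
def AxOne : Prop := ∀ c : C, ψ (c ⊗ₜ (1 : P)) = (1 : P) ⊗ₜ c

/-- entwining axiom `(id⊗Δ)∘ψ = ψ₁₂∘ψ₂₃∘(Δ⊗id)` -/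
def AxComul : Prop :=
  map LinearMap.id (Δ k C) ∘ₗ ψ =
    (TensorProduct.assoc k P C C).toLinearMap
      ∘ₗ map ψ LinearMap.id
      ∘ₗ (TensorProduct.assoc k C P C).symm.toLinearMap
      ∘ₗ map LinearMap.id ψ
      ∘ₗ (TensorProduct.assoc k C C P).toLinearMap
      ∘ₗ map (Δ k C) LinearMap.id

/-- entwining axiom `(id⊗ε)∘ψ = ε⊗id` -/
def AxCounit : Prop :=
  (TensorProduct.rid k P).toLinearMap ∘ₗ map LinearMap.id (ε k C) ∘ₗ ψ =
    (TensorProduct.lid k P).toLinearMap ∘ₗ map (ε k C) LinearMap.id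

/-- `ψ` is an entwining map for the algebra `P` and the coalgebra `C` -/
def IsEntwining : Prop :=
  AxMul k P C ψ ∧ AxOne k P C ψ ∧ AxComul k P C ψ ∧ AxCounit k P C ψ

variable (e : C)

/-- `e` is a group-like element -/
def IsGrouplike : Prop :=
  Δ k C e = e ⊗ₜ[k] e ∧ ε k C e = 1

variable (ψC : C ⊗[k] C →ₗ[k] C ⊗[k] C)

/-- `(id⊗Δ)∘ψ^C = ψ^C₁₂∘ψ^C₂₃∘(Δ⊗id)` -/
def AxPsiCComul : Prop :=
  map LinearMap.id (Δ k C) ∘ₗ ψC =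
    (TensorProduct.assoc k C C C).toLinearMap
      ∘ₗ map ψC LinearMap.id
      ∘ₗ (TensorProduct.assoc k C C C).symm.toLinearMap
      ∘ₗ map LinearMap.id ψC
      ∘ₗ (TensorProduct.assoc k C C C).toLinearMap
      ∘ₗ map (Δ k C) LinearMap.id

/-- `(id⊗ε)∘ψ^C = ε⊗id` -/
def AxPsiCCounit : Prop :=
  (TensorProduct.rid k C).toLinearMap ∘ₗ map LinearMap.id (ε k C) ∘ₗ ψC =
    (TensorProduct.lid k C).toLinearMap ∘ₗ map (ε k C) LinearMap.id

/-- `ψ^C(e ⊗ c) = Δc` -/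
def AxPsiCUnit : Prop := ∀ c : C, ψC (e ⊗ₜ[k] c) = Δ k C c

/-- `(P, C, ψ, e, ψ^C)` form entwining data -/
def IsEntwiningData : Prop :=
  IsEntwining k P C ψ ∧ IsGrouplike k C e ∧
    AxPsiCComul k C ψC ∧ AxPsiCCounit k C ψC ∧ AxPsiCUnit k C e ψC

/-- the right coaction `Δ_R u = ψ(e ⊗ u)` on `P` -/
def deltaR : P →ₗ[k] P ⊗[k] C := ψ ∘ₗ TensorProduct.mk k C P e

/-- the fixed point subspace `M = P^{coC}_e`, as a submodule of `P` -/
def Msub : Submodule k P where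
  carrier := {x : P | ψ (e ⊗ₜ x) = x ⊗ₜ e}
  add_mem' := by
    intro a b ha hb
    simp only [Set.mem_setOf_eq] at *
    rw [TensorProduct.tmul_add, map_add, ha, hb, TensorProduct.add_tmul]
  zero_mem' := by
    simp only [Set.mem_setOf_eq, TensorProduct.tmul_zero, map_zero,
      TensorProduct.zero_tmul]
  smul_mem' := by
    intro r x hx
    simp only [Set.mem_setOf_eq] at *
    rw [TensorProduct.tmul_smul, map_smul, hx, TensorProduct.smul_tmul']

/-- the subspace `M ⊗ C` of `P ⊗ C` -/
def MCsub : Submodule k (P ⊗[k] C) :=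
  LinearMap.range (map (Msub k P C ψ e).subtype (LinearMap.id : C →ₗ[k] C))

variable (ρ : C ⊗[k] P →ₗ[k] P) (σ : C ⊗[k] C →ₗ[k] P)

/-- the map `ρ̂ : c ⊗ x ↦ ρ(c₍₁₎ ⊗ x_α) ⊗ c₍₂₎^α` -/
def rhat : C ⊗[k] P →ₗ[k] P ⊗[k] C :=
  map ρ LinearMap.id
    ∘ₗ (TensorProduct.assoc k C P C).symm.toLinearMap
    ∘ₗ map LinearMap.id ψ
    ∘ₗ (TensorProduct.assoc k C C P).toLinearMap
    ∘ₗ map (Δ k C) LinearMap.id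

/-- the map `σ̂ : b ⊗ c ↦ σ(b₍₁₎ ⊗ c_A) ⊗ b₍₂₎^A` -/
def shat : C ⊗[k] C →ₗ[k] P ⊗[k] C :=
  map σ LinearMap.id
    ∘ₗ (TensorProduct.assoc k C C C).symm.toLinearMap
    ∘ₗ map LinearMap.id ψC
    ∘ₗ (TensorProduct.assoc k C C C).toLinearMap
    ∘ₗ map (Δ k C) LinearMap.id

/-- multiplication of the first two factors: `x ⊗ (y ⊗ c) ↦ xy ⊗ c` -/
def mulPC : P ⊗[k] (P ⊗[k] C) →ₗ[k] P ⊗[k] C :=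
  map (μ k P) LinearMap.id ∘ₗ (TensorProduct.assoc k P P C).symm.toLinearMap

/-- the crossed product `(x ⊗ b)(y ⊗ c) = xρ(b₍₁₎⊗y_α)σ(b₍₂₎^α₍₁₎⊗c_A) ⊗ b₍₂₎^α₍₂₎^A` -/
def prodX : (P ⊗[k] C) ⊗[k] (P ⊗[k] C) →ₗ[k] P ⊗[k] C :=
  mulPC k P C
    ∘ₗ map LinearMap.id (mulPC k P C)
    ∘ₗ map LinearMap.id
        (map LinearMap.id (shat k P C ψC σ)
          ∘ₗ (TensorProduct.assoc k P C C).toLinearMap)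
    ∘ₗ map LinearMap.id
        (map (rhat k P C ψ ρ) LinearMap.id
          ∘ₗ (TensorProduct.assoc k C P C).symm.toLinearMap)
    ∘ₗ (TensorProduct.assoc k P C (P ⊗[k] C)).toLinearMap

/-- condition (i): `ρ(e,x) = x` for `x ∈ M` and `ρ(c,1) = ε(c)1` -/
def CondI : Prop :=
  (∀ x : P, x ∈ Msub k P C ψ e → ρ (e ⊗ₜ x) = x) ∧
    ∀ c : C, ρ (c ⊗ₜ (1 : P)) = ε k C c • (1 : P)

/-- condition (ii): `ρ̂` maps `C ⊗ M` into `M ⊗ C` -/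
def CondII : Prop :=
  ∀ (c : C) (x : P), x ∈ Msub k P C ψ e →
    rhat k P C ψ ρ (c ⊗ₜ x) ∈ MCsub k P C ψ e

/-- the right hand side of condition (iii): `(μ⊗id)∘(id⊗ρ̂)∘(ρ̂⊗id)` -/
def BmapIII : C ⊗[k] (P ⊗[k] P) →ₗ[k] P ⊗[k] C :=
  mulPC k P C
    ∘ₗ map LinearMap.id (rhat k P C ψ ρ)
    ∘ₗ (TensorProduct.assoc k P C P).toLinearMap
    ∘ₗ map (rhat k P C ψ ρ) LinearMap.id
    ∘ₗ (TensorProduct.assoc k C P P).symm.toLinearMap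

/-- condition (iii): twisted multiplicativity of `ρ` -/
def CondIII : Prop :=
  ∀ (c : C) (x y : P), x ∈ Msub k P C ψ e → y ∈ Msub k P C ψ e →
    rhat k P C ψ ρ (c ⊗ₜ (x * y)) = BmapIII k P C ψ ρ (c ⊗ₜ (x ⊗ₜ y))

/-- `σ` takes values in `M` -/
def SigmaIntoM : Prop := ∀ b c : C, σ (b ⊗ₜ c) ∈ Msub k P C ψ e

/-- condition (iv): `σ(e⊗c) = ε(c)1` and `σ(c₍₁₎⊗e_A) ⊗ c₍₂₎^A = 1 ⊗ c` -/
def CondIV : Prop :=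
  (∀ c : C, σ (e ⊗ₜ c) = ε k C c • (1 : P)) ∧
    ∀ c : C, shat k P C ψC σ (c ⊗ₜ e) = (1 : P) ⊗ₜ c

/-- `(ρ, σ)` are crossed product data: conditions (i)–(iv). -/
def IsCrossedData : Prop :=
  CondI k P C ψ e ρ ∧ CondII k P C ψ e ρ ∧ CondIII k P C ψ e ρ ∧
    SigmaIntoM k P C ψ e σ ∧ CondIV k P C e ψC σ

/-- left hand side of the cocycle condition (2.6) -/
def CocLHS : C ⊗[k] (C ⊗[k] C) →ₗ[k] P ⊗[k] C :=
  mulPC k P C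
    ∘ₗ map LinearMap.id (shat k P C ψC σ)
    ∘ₗ (TensorProduct.assoc k P C C).toLinearMap
    ∘ₗ map (rhat k P C ψ ρ) LinearMap.id
    ∘ₗ (TensorProduct.assoc k C P C).symm.toLinearMap
    ∘ₗ map LinearMap.id (shat k P C ψC σ)

/-- right hand side of the cocycle condition (2.6) -/
def CocRHS : C ⊗[k] (C ⊗[k] C) →ₗ[k] P ⊗[k] C :=
  mulPC k P C
    ∘ₗ map LinearMap.id (shat k P C ψC σ)
    ∘ₗ (TensorProduct.assoc k P C C).toLinearMap
    ∘ₗ map (shat k P C ψC σ) LinearMap.id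
    ∘ₗ (TensorProduct.assoc k C C C).symm.toLinearMap

/-- the cocycle condition (2.6) -/
def Cocycle : Prop := CocLHS k P C ψ ψC ρ σ = CocRHS k P C ψC σ

/-- left hand side of the twisted module condition (2.7) -/
def TwLHS : C ⊗[k] (C ⊗[k] P) →ₗ[k] P ⊗[k] C :=
  mulPC k P C
    ∘ₗ map LinearMap.id (shat k P C ψC σ)
    ∘ₗ (TensorProduct.assoc k P C C).toLinearMap
    ∘ₗ map (rhat k P C ψ ρ) LinearMap.id
    ∘ₗ (TensorProduct.assoc k C P C).symm.toLinearMap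
    ∘ₗ map LinearMap.id (rhat k P C ψ ρ)

/-- right hand side of the twisted module condition (2.7) -/
def TwRHS : C ⊗[k] (C ⊗[k] P) →ₗ[k] P ⊗[k] C :=
  mulPC k P C
    ∘ₗ map LinearMap.id (rhat k P C ψ ρ)
    ∘ₗ (TensorProduct.assoc k P C P).toLinearMap
    ∘ₗ map (shat k P C ψC σ) LinearMap.id
    ∘ₗ (TensorProduct.assoc k C C P).symm.toLinearMap

/-- the twisted module condition (2.7), for `x ∈ M` -/
def Twisted : Prop :=
  ∀ (a b : C) (x : P), x ∈ Msub k P C ψ e →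
    TwLHS k P C ψ ψC ρ σ (a ⊗ₜ (b ⊗ₜ x)) = TwRHS k P C ψ ψC ρ σ (a ⊗ₜ (b ⊗ₜ x))

end Entwine

namespace Entwine

section Aux

variable (k : Type) [Field k] (P : Type) [Ring P] [Algebra k P]
  (C : Type) [AddCommGroup C] [Module k C] [Coalgebra k C]
  (ψ : C ⊗[k] P →ₗ[k] P ⊗[k] C) (e : C) (ψC : C ⊗[k] C →ₗ[k] C ⊗[k] C)
  (ρ : C ⊗[k] P →ₗ[k] P) (σ : C ⊗[k] C →ₗ[k] P)

lemma rhat_e_mem (h1 : ∀ x : P, x ∈ Msub k P C ψ e → ρ (e ⊗ₜ x) = x)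
    (hg : Δ k C e = e ⊗ₜ[k] e) {x : P} (hx : x ∈ Msub k P C ψ e) :
    rhat k P C ψ ρ (e ⊗ₜ x) = x ⊗ₜ e := by
  have hψ : ψ (e ⊗ₜ x) = x ⊗ₜ e := hx
  simp [rhat, hg, hψ, h1 x hx]

lemma rhat_one (hone : AxOne k P C ψ)
    (h2 : ∀ c : C, ρ (c ⊗ₜ (1 : P)) = ε k C c • (1 : P)) (c : C) :
    rhat k P C ψ ρ (c ⊗ₜ (1 : P)) = (1 : P) ⊗ₜ c := by
  have key : ∀ t : C ⊗[k] C,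
      map ρ LinearMap.id
        ((TensorProduct.assoc k C P C).symm
          (map LinearMap.id ψ
            ((TensorProduct.assoc k C C P) (t ⊗ₜ (1 : P))))) =
      map (Algebra.linearMap k P) LinearMap.id ((ε k C).rTensor C t) := by
    intro t
    induction t using TensorProduct.induction_on with
    | zero => simp
    | tmul a b =>
        simp [hone b, h2 a, Algebra.algebraMap_eq_smul_one,
          TensorProduct.smul_tmul']
    | add u v hu hv =>
        simp only [TensorProduct.add_tmul, map_add, hu, hv]
  have : rhat k P C ψ ρ (c ⊗ₜ (1 : P)) =
      map (Algebra.linearMap k P) LinearMap.id ((ε k C).rTensor C (Δ k C c)) := by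
    simpa [rhat] using key (Δ k C c)
  rw [this, Coalgebra.rTensor_counit_comul]
  simp

lemma shat_e (hσe : ∀ c : C, σ (e ⊗ₜ c) = ε k C c • (1 : P))
    (hg : Δ k C e = e ⊗ₜ[k] e) (hψCe : AxPsiCUnit k C e ψC) (c : C) :
    shat k P C ψC σ (e ⊗ₜ c) = (1 : P) ⊗ₜ c := by
  have key : ∀ t : C ⊗[k] C,
      map σ LinearMap.id ((TensorProduct.assoc k C C C).symm (e ⊗ₜ t)) =
      map (Algebra.linearMap k P) LinearMap.id ((ε k C).rTensor C t) := by
    intro t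
    induction t using TensorProduct.induction_on with
    | zero => simp
    | tmul a b =>
        simp [hσe a, Algebra.algebraMap_eq_smul_one, TensorProduct.smul_tmul']
    | add u v hu hv =>
        simp only [TensorProduct.tmul_add, map_add, hu, hv]
  have : shat k P C ψC σ (e ⊗ₜ c) =
      map (Algebra.linearMap k P) LinearMap.id ((ε k C).rTensor C (Δ k C c)) := by
    simpa [shat, hg, hψCe c] using key (Δ k C c)
  rw [this, Coalgebra.rTensor_counit_comul]
  simp

end Aux

/-- In the crossed product algebra `M ×_{ρ,σ} C`, the element
`1 ⊗ e` is a two-sided unit. -/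
theorem crossed_product_unit
    (k : Type) [Field k] (P : Type) [Ring P] [Algebra k P]
    (C : Type) [AddCommGroup C] [Module k C] [Coalgebra k C]
    (ψ : C ⊗[k] P →ₗ[k] P ⊗[k] C) (e : C) (ψC : C ⊗[k] C →ₗ[k] C ⊗[k] C)
    (ρ : C ⊗[k] P →ₗ[k] P) (σ : C ⊗[k] C →ₗ[k] P)
    (hdata : IsEntwiningData k P C ψ e ψC)
    (hcross : IsCrossedData k P C ψ e ψC ρ σ)
    (hcoc : Cocycle k P C ψ ψC ρ σ)
    (htw : Twisted k P C ψ e ψC ρ σ) :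
    ∀ (x : P), x ∈ Msub k P C ψ e → ∀ c : C,
      prodX k P C ψ ψC ρ σ (((1 : P) ⊗ₜ e) ⊗ₜ (x ⊗ₜ c)) = x ⊗ₜ c ∧
      prodX k P C ψ ψC ρ σ ((x ⊗ₜ c) ⊗ₜ ((1 : P) ⊗ₜ e)) = x ⊗ₜ c := by
  intro x hx c
  obtain ⟨⟨hmul, hone, hcomul, hcounit⟩, ⟨hg, hge⟩, hCcomul, hCcounit, hCe⟩ := hdata
  obtain ⟨⟨hI1, hI2⟩, hII, hIII, hσM, hIV1, hIV2⟩ := hcross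
  constructor
  · have h1 : rhat k P C ψ ρ (e ⊗ₜ x) = x ⊗ₜ e := rhat_e_mem k P C ψ e ρ hI1 hg hx
    have h2 : shat k P C ψC σ (e ⊗ₜ c) = (1 : P) ⊗ₜ c :=
      shat_e k P C e ψC σ hIV1 hg hCe c
    simp [prodX, mulPC, h1, h2]
  · have h1 : rhat k P C ψ ρ (c ⊗ₜ (1 : P)) = (1 : P) ⊗ₜ c :=
      rhat_one k P C ψ ρ hone hI2 c
    have h2 : shat k P C ψC σ (c ⊗ₜ e) = (1 : P) ⊗ₜ c := hIV2 c
    simp [prodX, mulPC, h1, h2]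

end Entwine
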